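/- arXiv:0806.3073 — 2 statements merged into one kernel-verified Lean document; each statement's English description precedes it below -/
import Mathlib

section
/- Let G be a connected graph of bounded degree and p > 1. The p-harmonic boundary ∂_p(G) is empty if and only if G is p-parabolic (i.e. 1_V lies in the D_p-closure of the bounded finitely supported functions). -/
open scoped ENNReal Classical

variable {V : Type*}

/-- A graph has degree bounded by `k`. -/
def BoundedDegree (G : SimpleGraph V) (k : ℕ) : Prop :=
  ∀ x : V, (G.neighborSet x).Finite ∧ (G.neighborSet x).ncard ≤ k

/-- A bounded real-valued function on the vertex set. -/
def BddFun (f : V → ℝ) : Prop := ∃ M : ℝ, ∀ x, |f x| ≤ M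

/-- The `p`-Dirichlet sum `I_p(f,V) = Σ_x Σ_{y ∈ N_x} |f(y)-f(x)|^p`. -/
noncomputable def Ip (G : SimpleGraph V) (p : ℝ) (f : V → ℝ) : ℝ≥0∞ :=
  ∑' x : V, ∑' y : V, if G.Adj x y then ENNReal.ofReal (|f y - f x| ^ p) else 0

/-- Membership in `BD_p(G)`: bounded with finite `p`-Dirichlet sum. -/
def MemBDp (G : SimpleGraph V) (p : ℝ) (f : V → ℝ) : Prop :=
  BddFun f ∧ Ip G p f ≠ ⊤

/-- The `BD_p` norm `(I_p(f,V))^{1/p} + sup_V |f|`. -/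
noncomputable def BDpNorm (G : SimpleGraph V) (p : ℝ) (f : V → ℝ) : ℝ :=
  (Ip G p f).toReal ^ (1/p) + ⨆ x, |f x|

/-- The `p`-th power of the `D_p`-distance from `f` to `0` (with base vertex `o`):
`I_p(f,V) + |f(o)|^p`, valued in `ℝ≥0∞`. -/
noncomputable def DpDist (G : SimpleGraph V) (p : ℝ) (o : V) (f : V → ℝ) : ℝ≥0∞ :=
  Ip G p f + ENNReal.ofReal (|f o| ^ p)

/-- `f` is bounded and lies in the `D_p`-closure of the finitely supported functions:
the space `B(\overline{ℝG})_{D_p}`. -/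
def BRClos (G : SimpleGraph V) (p : ℝ) (o : V) (f : V → ℝ) : Prop :=
  BddFun f ∧ ∀ ε : ℝ, 0 < ε → ∃ u : V → ℝ,
    (Function.support u).Finite ∧ DpDist G p o (fun x => f x - u x) < ENNReal.ofReal ε

/-- The `p`-Laplacian `Δ_p h (x) = Σ_{y ∈ N_x} |h(y)-h(x)|^{p-2}(h(y)-h(x))`. -/
noncomputable def pLap (G : SimpleGraph V) (p : ℝ) (h : V → ℝ) (x : V) : ℝ :=
  ∑' y : V, if G.Adj x y then |h y - h x| ^ (p-2) * (h y - h x) else 0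

/-- `h` is `p`-harmonic on all of `V`. -/
def PHarmonic (G : SimpleGraph V) (p : ℝ) (h : V → ℝ) : Prop :=
  ∀ x, pLap G p h x = 0

/-- The pairing `⟨Δ_p h, f⟩ = Σ_x Σ_{y ∈ N_x} |h(y)-h(x)|^{p-2}(h(y)-h(x))(f(y)-f(x))`. -/
noncomputable def pPair (G : SimpleGraph V) (p : ℝ) (h f : V → ℝ) : ℝ :=
  ∑' x : V, ∑' y : V,
    if G.Adj x y then |h y - h x| ^ (p-2) * (h y - h x) * (f y - f x) else 0

/-- A character of the commutative Banach algebra `BD_p(G)`: a nonzero multiplicative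
linear functional (characters are automatically norm-bounded). -/
structure BDpChar (G : SimpleGraph V) (p : ℝ) where
  toFun : (V → ℝ) → ℝ
  map_add : ∀ f g, MemBDp G p f → MemBDp G p g →
    toFun (fun x => f x + g x) = toFun f + toFun g
  map_mul : ∀ f g, MemBDp G p f → MemBDp G p g →
    toFun (fun x => f x * g x) = toFun f * toFun g
  map_smul : ∀ (c : ℝ) f, MemBDp G p f → toFun (fun x => c * f x) = c * toFun f
  bound : ∀ f, MemBDp G p f → |toFun f| ≤ BDpNorm G p f
  nonzero : ∃ f, MemBDp G p f ∧ toFun f ≠ 0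

/-- `τ` belongs to the `p`-harmonic boundary `∂_p(G)`: it is not evaluation at any vertex,
and it annihilates `B(\overline{ℝG})_{D_p}`. -/
def InPBoundary (G : SimpleGraph V) (p : ℝ) (o : V) (τ : BDpChar G p) : Prop :=
  (∀ x : V, ∃ f, MemBDp G p f ∧ τ.toFun f ≠ f x) ∧
  (∀ f, BRClos G p o f → τ.toFun f = 0)

open Filter Topology Function

/-!
If `1_V` lies in the closure, a character `τ` killing the closure kills `1_V`, hence every `f`,
since `τ f = τ (f * 1_V) = τ f * τ 1_V`; this contradicts `τ ≠ 0`.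

Otherwise, no set `{|f| < 1}` with `f` in the closure is empty: if it were, `min (|f|, 1) = 1_V`
would lie in the closure, which is stable under `1`-Lipschitz maps fixing `0`. As the closure is
also stable under sums, these sets form a filter base. Taking limits along an ultrafilter refining
it gives a character of `BD_p(G)` that kills the closure. It is no point evaluation, because each
Dirac function `δ_x` is finitely supported, hence lies in the closure.
-/

section Estimates

variable {G : SimpleGraph V} {p : ℝ}

lemma Ip_const (hp : p ≠ 0) (c : ℝ) : Ip G p (fun _ => c) = 0 := by
  simp [Ip, Real.zero_rpow hp]

lemma memBDp_const (hp : p ≠ 0) (c : ℝ) : MemBDp G p (fun _ => c) :=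
  ⟨⟨|c|, fun _ => le_rfl⟩, by simp [Ip_const hp]⟩

lemma Ip_ne_top_of_finite_support (hp : p ≠ 0) (hG : ∀ x, (G.neighborSet x).Finite)
    {f : V → ℝ} (hf : (support f).Finite) : Ip G p f ≠ ⊤ := by
  set S : Set (V × V) :=
    ⋃ a ∈ support f, ({a} ×ˢ G.neighborSet a ∪ G.neighborSet a ×ˢ {a}) with hS
  have hSfin : S.Finite :=
    hf.biUnion fun a _ => ((Set.finite_singleton a).prod (hG a)).union
      ((hG a).prod (Set.finite_singleton a))
  have hsupp : (support fun e : V × V =>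
      if G.Adj e.1 e.2 then ENNReal.ofReal (|f e.2 - f e.1| ^ p) else 0) ⊆ hSfin.toFinset := by
    rintro ⟨a, b⟩ hab
    have hne : f b ≠ f a := by
      rintro heq
      simp [heq, Real.zero_rpow hp] at hab
    have hadj : G.Adj a b := by
      by_contra h
      simp [h] at hab
    simp only [Set.Finite.coe_toFinset, hS, Set.mem_iUnion, Set.mem_union, Set.mem_prod,
      Set.mem_singleton_iff, SimpleGraph.mem_neighborSet, mem_support, exists_prop]
    by_cases ha : f a = 0
    · exact ⟨b, fun hb => hne (hb.trans ha.symm), Or.inr ⟨hadj.symm, rfl⟩⟩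
    · exact ⟨a, ha, Or.inl ⟨rfl, hadj⟩⟩
  rw [Ip, ← ENNReal.tsum_prod, tsum_eq_sum' hsupp]
  exact ENNReal.sum_ne_top.2 fun e _ => by split_ifs <;> simp

lemma memBDp_of_finite_support (hp : p ≠ 0) (hG : ∀ x, (G.neighborSet x).Finite)
    {f : V → ℝ} (hb : BddFun f) (hf : (support f).Finite) : MemBDp G p f :=
  ⟨hb, Ip_ne_top_of_finite_support hp hG hf⟩

lemma ofReal_abs_rpow_le_mul (hp : 0 < p) {L a b : ℝ} (hL : 0 ≤ L) (h : |a| ≤ L * |b|) :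
    ENNReal.ofReal (|a| ^ p) ≤ ENNReal.ofReal (L ^ p) * ENNReal.ofReal (|b| ^ p) := by
  rw [← ENNReal.ofReal_mul (Real.rpow_nonneg hL p), ← Real.mul_rpow hL (abs_nonneg b)]
  exact ENNReal.ofReal_le_ofReal (Real.rpow_le_rpow (abs_nonneg a) h hp.le)

lemma abs_add_rpow_le (hp : 0 < p) (u v : ℝ) :
    |u + v| ^ p ≤ 2 ^ p * (|u| ^ p + |v| ^ p) := by
  have hmax : max |u| |v| ^ p ≤ |u| ^ p + |v| ^ p := by
    rcases le_total |u| |v| with h | h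
    · rw [max_eq_right h]
      linarith [Real.rpow_nonneg (abs_nonneg u) p]
    · rw [max_eq_left h]
      linarith [Real.rpow_nonneg (abs_nonneg v) p]
  calc |u + v| ^ p ≤ (2 * max |u| |v|) ^ p := by
        gcongr
        linarith [abs_add_le u v, le_max_left |u| |v|, le_max_right |u| |v|]
    _ = 2 ^ p * max |u| |v| ^ p := Real.mul_rpow zero_le_two (le_max_of_le_left (abs_nonneg u))
    _ ≤ 2 ^ p * (|u| ^ p + |v| ^ p) := by gcongr

lemma ofReal_abs_add_rpow_le (hp : 0 < p) (u v : ℝ) :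
    ENNReal.ofReal (|u + v| ^ p) ≤
      ENNReal.ofReal (2 ^ p) * (ENNReal.ofReal (|u| ^ p) + ENNReal.ofReal (|v| ^ p)) := by
  rw [← ENNReal.ofReal_add (by positivity) (by positivity),
    ← ENNReal.ofReal_mul (by positivity)]
  exact ENNReal.ofReal_le_ofReal (abs_add_rpow_le hp u v)

variable (o : V)

lemma DpDist_add_le (hp : 0 < p) (a b : V → ℝ) :
    DpDist G p o (fun x => a x + b x) ≤
      ENNReal.ofReal (2 ^ p) * (DpDist G p o a + DpDist G p o b) := by
  have hIp : Ip G p (fun x => a x + b x) ≤ ENNReal.ofReal (2 ^ p) * (Ip G p a + Ip G p b) := by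
    simp only [Ip, ← ENNReal.tsum_add, ← ENNReal.tsum_mul_left]
    gcongr with x y
    split_ifs
    · rw [show a y + b y - (a x + b x) = (a y - a x) + (b y - b x) by ring]
      exact ofReal_abs_add_rpow_le hp _ _
    · simp
  calc DpDist G p o (fun x => a x + b x)
      ≤ ENNReal.ofReal (2 ^ p) * (Ip G p a + Ip G p b)
        + ENNReal.ofReal (2 ^ p) * (ENNReal.ofReal (|a o| ^ p) + ENNReal.ofReal (|b o| ^ p)) :=
        add_le_add hIp (ofReal_abs_add_rpow_le hp _ _)
    _ = ENNReal.ofReal (2 ^ p) * (DpDist G p o a + DpDist G p o b) := by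
        simp only [DpDist]; ring

lemma DpDist_comp_le (hp : 0 < p) {φ : ℝ → ℝ} {K : NNReal} (hφ : LipschitzWith K φ)
    (hφ0 : φ 0 = 0) (g : V → ℝ) :
    DpDist G p o (fun x => φ (g x)) ≤ ENNReal.ofReal ((K : ℝ) ^ p) * DpDist G p o g := by
  have hφ' : ∀ s t, |φ s - φ t| ≤ K * |s - t| := by
    simpa only [Real.dist_eq] using hφ.dist_le_mul
  simp only [DpDist, Ip, mul_add, ← ENNReal.tsum_mul_left]
  gcongr with x y
  · split_ifs
    · exact ofReal_abs_rpow_le_mul hp K.2 (hφ' _ _)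
    · simp
  · exact ofReal_abs_rpow_le_mul hp K.2 (by simpa [hφ0] using hφ' (g o) 0)

end Estimates

section Closure

variable {G : SimpleGraph V} {p : ℝ} {o : V} {f g : V → ℝ}

lemma brclos_iff : BRClos G p o f ↔ BddFun f ∧ ∀ η : ℝ≥0∞, 0 < η →
    ∃ u : V → ℝ, (support u).Finite ∧ DpDist G p o (fun x => f x - u x) < η := by
  refine and_congr_right fun _ =>
    ⟨fun h η hη => ?_, fun h ε hε => h _ (ENNReal.ofReal_pos.2 hε)⟩
  obtain ⟨r, -, hr, hrη⟩ := ENNReal.lt_iff_exists_real_btwn.1 hη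
  obtain ⟨u, hu, hfu⟩ := h r (ENNReal.ofReal_pos.1 hr)
  exact ⟨u, hu, hfu.trans hrη⟩

lemma brclos_of_finite_support (hp : p ≠ 0) (hb : BddFun f) (hf : (support f).Finite) :
    BRClos G p o f :=
  ⟨hb, fun ε hε => ⟨f, hf, by simp [DpDist, Ip_const hp, Real.zero_rpow hp, hε]⟩⟩

lemma BRClos.add (hp : 0 < p) (hf : BRClos G p o f) (hg : BRClos G p o g) :
    BRClos G p o (fun x => f x + g x) := by
  obtain ⟨⟨Mf, hMf⟩, hf⟩ := brclos_iff.1 hf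
  obtain ⟨⟨Mg, hMg⟩, hg⟩ := brclos_iff.1 hg
  have hb : BddFun (fun x => f x + g x) :=
    ⟨Mf + Mg, fun x => (abs_add_le _ _).trans (add_le_add (hMf x) (hMg x))⟩
  refine brclos_iff.2 ⟨hb, fun η hη => ?_⟩
  obtain ⟨c, hc, hcη⟩ := ENNReal.exists_pos_mul_lt ENNReal.ofReal_ne_top hη.ne'
  obtain ⟨u, hu, hfu⟩ := hf (c / 2) (ENNReal.half_pos hc.ne')
  obtain ⟨w, hw, hgw⟩ := hg (c / 2) (ENNReal.half_pos hc.ne')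
  refine ⟨fun x => u x + w x, (hu.union hw).subset (support_add _ _), ?_⟩
  calc DpDist G p o (fun x => f x + g x - (u x + w x))
      = DpDist G p o (fun x => (f x - u x) + (g x - w x)) := by
        congr 1; funext x; ring
    _ ≤ ENNReal.ofReal (2 ^ p) * (DpDist G p o (fun x => f x - u x)
          + DpDist G p o (fun x => g x - w x)) := DpDist_add_le o hp _ _
    _ ≤ ENNReal.ofReal (2 ^ p) * c := by
        gcongr
        simpa only [ENNReal.add_halves] using add_le_add hfu.le hgw.le
    _ < η := by rwa [mul_comm]

lemma BRClos.comp_lipschitz (hp : 0 < p) {φ : ℝ → ℝ} {K : NNReal} (hφ : LipschitzWith K φ)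
    (hφ0 : φ 0 = 0) (hf : BRClos G p o f) : BRClos G p o (fun x => φ (f x)) := by
  have hφ' : ∀ t, |φ t| ≤ K * |t| := fun t => by
    simpa [hφ0, Real.dist_eq] using hφ.dist_le_mul t 0
  obtain ⟨⟨M, hM⟩, hf⟩ := brclos_iff.1 hf
  refine brclos_iff.2
    ⟨⟨K * M, fun x => (hφ' _).trans (by gcongr; exact hM x)⟩, fun η hη => ?_⟩
  obtain ⟨c, hc, hcη⟩ := ENNReal.exists_pos_mul_lt ENNReal.ofReal_ne_top hη.ne'
  obtain ⟨u, hu, hfu⟩ := hf c hc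
  have hsupp : support (fun x => φ (f x) - φ (f x - u x)) ⊆ support u :=
    support_subset_iff'.2 fun x hx => by simp [notMem_support.1 hx]
  refine ⟨_, hu.subset hsupp, ?_⟩
  calc DpDist G p o (fun x => φ (f x) - (φ (f x) - φ (f x - u x)))
      = DpDist G p o (fun x => φ (f x - u x)) := by simp only [sub_sub_cancel]
    _ ≤ ENNReal.ofReal ((K : ℝ) ^ p) * DpDist G p o (fun x => f x - u x) :=
        DpDist_comp_le o hp hφ hφ0 _
    _ ≤ ENNReal.ofReal ((K : ℝ) ^ p) * c := by gcongr
    _ < η := by rwa [mul_comm]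

end Closure

section Boundary

variable {G : SimpleGraph V} {p : ℝ} {o : V}

/-- Sublevel sets at level `1` suffice, since the closure is stable under scaling. -/
def vanishingFilter (G : SimpleGraph V) (p : ℝ) (o : V) : Filter V :=
  ⨅ f : {f : V → ℝ // BRClos G p o f}, 𝓟 {x | |f.1 x| < 1}

lemma tendsto_vanishingFilter (hp : 0 < p) {f : V → ℝ} (hf : BRClos G p o f) :
    Tendsto f (vanishingFilter G p o) (𝓝 0) := by
  refine Metric.tendsto_nhds.2 fun ε hε => ?_
  have hscaled : BRClos G p o (fun x => ε⁻¹ • f x) :=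
    hf.comp_lipschitz hp (lipschitzWith_smul ε⁻¹) (smul_zero _)
  refine mem_of_superset (mem_iInf_of_mem ⟨_, hscaled⟩ (mem_principal_self _)) fun x hx => ?_
  have hlt : ε⁻¹ * |f x| < 1 := by
    simpa [abs_mul, abs_of_pos hε] using hx
  show dist (f x) 0 < ε
  rwa [Real.dist_0_eq_abs, ← inv_mul_lt_one₀ hε]

lemma vanishingFilter_neBot (hp : 0 < p) (h : ¬ BRClos G p o (fun _ => (1 : ℝ))) :
    (vanishingFilter G p o).NeBot := by
  have hnorm {f : V → ℝ} (hf : BRClos G p o f) : BRClos G p o (fun x => ‖f x‖) :=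
    hf.comp_lipschitz hp lipschitzWith_one_norm norm_zero
  have : Nonempty {f : V → ℝ // BRClos G p o f} :=
    ⟨⟨0, brclos_of_finite_support hp.ne' ⟨0, by simp⟩ (by simp)⟩⟩
  refine iInf_neBot_of_directed' ?_ fun ⟨f, hf⟩ => principal_neBot_iff.2 ?_
  · rintro ⟨f, hf⟩ ⟨g, hg⟩
    have hsub : {x | |‖f x‖ + ‖g x‖| < 1} ⊆ {x | |f x| < 1} ∩ {x | |g x| < 1} := by
      intro x hx
      simp only [Set.mem_ofPred_eq, Real.norm_eq_abs] at hx
      rw [abs_of_nonneg (by positivity)] at hx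
      exact ⟨show |f x| < 1 by linarith [abs_nonneg (g x)],
        show |g x| < 1 by linarith [abs_nonneg (f x)]⟩
    exact ⟨⟨_, (hnorm hf).add hp (hnorm hg)⟩,
      principal_mono.2 (hsub.trans Set.inter_subset_left),
      principal_mono.2 (hsub.trans Set.inter_subset_right)⟩
  · by_contra hempty
    refine h ?_
    convert (hnorm hf).comp_lipschitz hp (LipschitzWith.id.min_const 1) (min_eq_left zero_le_one)
      using 2 with x
    have hx : 1 ≤ |f x| := not_lt.1 fun hx => hempty ⟨x, hx⟩
    simp [Real.norm_eq_abs, hx]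

lemma BddFun.tendsto_limUnder {f : V → ℝ} (hf : BddFun f) (U : Ultrafilter V) :
    Tendsto f U (𝓝 (limUnder U f)) := by
  obtain ⟨M, hM⟩ := hf
  have hIcc : ∀ᶠ x in (U : Filter V), f x ∈ Set.Icc (-M) M :=
    Eventually.of_forall fun x => abs_le.1 (hM x)
  obtain ⟨a, -, ha⟩ := isCompact_Icc.ultrafilter_le_nhds (U.map f) (le_principal_iff.2 hIcc)
  exact tendsto_nhds_limUnder ⟨a, ha⟩

noncomputable def BDpChar.ofUltrafilter (hp : p ≠ 0) (U : Ultrafilter V) : BDpChar G p where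
  toFun f := limUnder U f
  map_add f g hf hg := ((hf.1.tendsto_limUnder U).add (hg.1.tendsto_limUnder U)).limUnder_eq
  map_mul f g hf hg := ((hf.1.tendsto_limUnder U).mul (hg.1.tendsto_limUnder U)).limUnder_eq
  map_smul c f hf := ((hf.1.tendsto_limUnder U).const_mul c).limUnder_eq
  bound f hf := by
    obtain ⟨M, hM⟩ := hf.1
    have hsup : |limUnder U f| ≤ ⨆ x, |f x| :=
      le_of_tendsto (hf.1.tendsto_limUnder U).abs
        (Eventually.of_forall fun x => le_ciSup ⟨M, by rintro _ ⟨y, rfl⟩; exact hM y⟩ x)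
    exact hsup.trans (le_add_of_nonneg_left (Real.rpow_nonneg ENNReal.toReal_nonneg _))
  nonzero := ⟨fun _ => 1, memBDp_const hp 1, by simp [tendsto_const_nhds.limUnder_eq]⟩

lemma inPBoundary_ofUltrafilter (hp : 0 < p) (hG : ∀ x, (G.neighborSet x).Finite)
    (U : Ultrafilter V) (hU : ↑U ≤ vanishingFilter G p o) :
    InPBoundary G p o (BDpChar.ofUltrafilter hp.ne' U) := by
  have hzero (f : V → ℝ) (hf : BRClos G p o f) : limUnder U f = 0 :=
    ((tendsto_vanishingFilter hp hf).mono_left hU).limUnder_eq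
  refine ⟨fun x => ?_, hzero⟩
  have hb : BddFun (Pi.single x (1 : ℝ)) :=
    ⟨1, fun y => by rcases eq_or_ne y x with rfl | hy <;> simp [*]⟩
  have hs : (support (Pi.single x (1 : ℝ))).Finite :=
    (Set.finite_singleton x).subset (Pi.support_single_subset)
  refine ⟨_, memBDp_of_finite_support hp.ne' hG hb hs, ?_⟩
  simp [BDpChar.ofUltrafilter, hzero _ (brclos_of_finite_support hp.ne' hb hs)]

lemma InPBoundary.not_brclos_one (hp : p ≠ 0) {τ : BDpChar G p} (hτ : InPBoundary G p o τ) :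
    ¬ BRClos G p o (fun _ => (1 : ℝ)) := fun h1 => by
  obtain ⟨f, hf, hτf⟩ := τ.nonzero
  have hmul := τ.map_mul f (fun _ => 1) hf (memBDp_const hp 1)
  simp only [mul_one, mul_zero, hτ.2 _ h1] at hmul
  exact hτf hmul

end Boundary

theorem stmt10_general (G : SimpleGraph V) (k : ℕ)
    (hk : BoundedDegree G k) (p : ℝ) (hp : 1 < p) (o : V) :
    (¬ ∃ τ : BDpChar G p, InPBoundary G p o τ) ↔
      BRClos G p o (fun _ => (1 : ℝ)) := by
  have hp0 : 0 < p := zero_lt_one.trans hp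
  constructor
  · intro hno
    by_contra hpar
    have := vanishingFilter_neBot hp0 hpar
    exact hno ⟨_, inPBoundary_ofUltrafilter hp0 (fun x => (hk x).1) _ (Ultrafilter.of_le _)⟩
  · rintro hpar ⟨τ, hτ⟩
    exact hτ.not_brclos_one hp0.ne' hpar

theorem stmt10 [Countable V] [Infinite V] (G : SimpleGraph V) (k : ℕ)
    (hG : G.Connected) (hk : BoundedDegree G k) (p : ℝ) (hp : 1 < p) (o : V) :
    (¬ ∃ τ : BDpChar G p, InPBoundary G p o τ) ↔
      BRClos G p o (fun _ => (1 : ℝ)) :=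
  stmt10_general G k hk p hp o
end

section
/- Let G and H be connected graphs of bounded degree with graph metrics, let p > 1, and let φ : V_G → V_H be a rough isometry. Then the pullback φ*: f ↦ f∘φ maps D_p(H) into D_p(G); more precisely there is a constant C (depending only on p and the rough isometry constants) such that I_p(f∘φ, V_G) ≤ C · I_p(f, V_H) for all f : V_H → ℝ. -/
open scoped ENNReal Classical

variable {V : Type*}

/-!
An edge `xy` of `G` is sent to vertices `φ x`, `φ y` at distance at most `L = ⌈a + b⌉` in `H`;
route it along an `H`-geodesic between them. Telescoping along the geodesic and Hölder's
inequality bound `|f (φ y) - f (φ x)|^p` by `L^(p-1)` times the energy of `f` on the geodesic.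
An edge of `H` starting at `u` is used only by geodesics of edges `xy` with `φ x`, `φ y` within
`L` of `u`; by the lower rough-isometry bound these `x`, `y` form a set of `G`-diameter at most
`a (2L + b)`, which bounded degree makes uniformly finite. So every edge of `H` is counted a
bounded number of times.
-/

open SimpleGraph Finset

theorem ENNReal.tsum_comp_le_mul_tsum_of_encard_fiber_le {α β : Type*} (π : α → β)
    (g : β → ℝ≥0∞) {M : ℕ} (hM : ∀ w, (π ⁻¹' {w}).encard ≤ M) :
    ∑' t, g (π t) ≤ M * ∑' w, g w := by
  rw [← ENNReal.tsum_fiberwise _ π, ← ENNReal.tsum_mul_left]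
  refine ENNReal.tsum_le_tsum fun w => ?_
  calc ∑' t : π ⁻¹' {w}, g (π t) = ∑' _ : π ⁻¹' {w}, g w := tsum_congr fun t => congrArg g t.2
    _ = (π ⁻¹' {w}).encard * g w := ENNReal.tsum_set_const _ _
    _ ≤ M * g w := by gcongr; exact_mod_cast hM w

namespace SimpleGraph

variable {G : SimpleGraph V} {k : ℕ}

lemma BoundedDegree.encard_neighborSet_le (hk : BoundedDegree G k) (x : V) :
    (G.neighborSet x).encard ≤ k := by
  rw [← (hk x).1.cast_ncard_eq]
  exact_mod_cast (hk x).2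

lemma Connected.setOf_dist_le_succ_subset (hG : G.Connected) (x₀ : V) (R : ℕ) :
    {x | G.dist x₀ x ≤ R + 1} ⊆ ⋃ z ∈ {x | G.dist x₀ x ≤ R}, insert z (G.neighborSet z) := by
  intro x (hx : G.dist x₀ x ≤ R + 1)
  by_cases hxR : G.dist x₀ x ≤ R
  · exact Set.mem_biUnion hxR (Set.mem_insert x _)
  obtain ⟨q, hq⟩ := hG.exists_walk_length_eq_dist x x₀
  cases q with
  | nil => simp at hxR
  | @cons _ z _ hxz q =>
    refine Set.mem_biUnion (x := z) ?_ (Set.mem_insert_of_mem _ hxz.symm)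
    have hzq : G.dist z x₀ ≤ q.length := dist_le q
    rw [Walk.length_cons] at hq
    rw [Set.mem_ofPred_eq, dist_comm]
    rw [dist_comm] at hx
    omega

lemma Connected.encard_setOf_dist_le (hG : G.Connected) (hk : BoundedDegree G k) (x₀ : V)
    (R : ℕ) : {x | G.dist x₀ x ≤ R}.encard ≤ (k + 1) ^ R := by
  induction R with
  | zero => simp [hG.dist_eq_zero_iff]
  | succ R ih =>
    have hfin : {x | G.dist x₀ x ≤ R}.Finite := Set.finite_of_encard_le_coe (k := (k + 1) ^ R)
      (by exact_mod_cast ih)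
    calc {x | G.dist x₀ x ≤ R + 1}.encard
        ≤ (⋃ z ∈ hfin.toFinset, insert z (G.neighborSet z)).encard :=
          Set.encard_le_encard (by simpa using hG.setOf_dist_le_succ_subset x₀ R)
      _ ≤ ∑ z ∈ hfin.toFinset, (insert z (G.neighborSet z)).encard :=
          Finset.set_encard_biUnion_le _ _
      _ ≤ ∑ _z ∈ hfin.toFinset, ((k : ℕ∞) + 1) :=
          sum_le_sum fun z _ => (Set.encard_insert_le _ _).trans (by
            gcongr; exact hk.encard_neighborSet_le z)
      _ = {x | G.dist x₀ x ≤ R}.encard * (k + 1) := by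
          rw [hfin.encard_eq_coe_toFinset_card, sum_const, nsmul_eq_mul]
      _ ≤ (k + 1) ^ (R + 1) := by rw [pow_succ]; gcongr

lemma Connected.encard_le_of_dist_le (hG : G.Connected) (hk : BoundedDegree G k) {s : Set V}
    {R : ℕ} (hs : ∀ x ∈ s, ∀ y ∈ s, G.dist x y ≤ R) : s.encard ≤ (k + 1) ^ R := by
  rcases s.eq_empty_or_nonempty with rfl | ⟨x₀, hx₀⟩
  · simp
  · exact (Set.encard_le_encard fun x hx => hs x₀ hx₀ x hx).trans
      (hG.encard_setOf_dist_le hk x₀ R)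

namespace Walk

variable {u v : V} (q : G.Walk u v)

lemma dist_left_getVert_le (i : ℕ) : G.dist u (q.getVert i) ≤ i :=
  (dist_le (q.take i)).trans (by simp [take_length])

lemma dist_getVert_right_le (i : ℕ) : G.dist (q.getVert i) v ≤ q.length - i :=
  (dist_le (q.drop i)).trans (by simp [drop_length])

lemma abs_sub_rpow_le (f : V → ℝ) {p : ℝ} (hp : 1 ≤ p) :
    |f v - f u| ^ p ≤ (q.length : ℝ) ^ (p - 1) *
      ∑ i ∈ range q.length, |f (q.getVert (i + 1)) - f (q.getVert i)| ^ p := by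
  have htel : f v - f u = ∑ i ∈ range q.length, (f (q.getVert (i + 1)) - f (q.getVert i)) := by
    rw [sum_range_sub (fun i => f (q.getVert i)), q.getVert_length, q.getVert_zero]
  calc |f v - f u| ^ p
      ≤ (∑ i ∈ range q.length, |f (q.getVert (i + 1)) - f (q.getVert i)|) ^ p := by
        rw [htel]; gcongr; exact abs_sum_le_sum_abs _ _
    _ ≤ _ := by simpa using Real.rpow_sum_le_const_mul_sum_rpow (range q.length) _ hp

end Walk

end SimpleGraph

noncomputable def edgeEnergy (G : SimpleGraph V) (p : ℝ) (f : V → ℝ) (e : V × V) : ℝ≥0∞ :=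
  if G.Adj e.1 e.2 then ENNReal.ofReal (|f e.2 - f e.1| ^ p) else 0

lemma Ip_eq_tsum_edgeEnergy (G : SimpleGraph V) (p : ℝ) (f : V → ℝ) :
    Ip G p f = ∑' e, edgeEnergy G p f e :=
  (ENNReal.tsum_prod' (f := edgeEnergy G p f)).symm

lemma Ip_eq_tsum_dart (G : SimpleGraph V) (p : ℝ) (f : V → ℝ) :
    Ip G p f = ∑' d : G.Dart, ENNReal.ofReal (|f d.snd - f d.fst| ^ p) := by
  have hsupp : Function.support (edgeEnergy G p f) ⊆ Set.range Dart.toProd := fun e he =>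
    ⟨⟨e, by by_contra h; exact he (if_neg h)⟩, rfl⟩
  rw [Ip_eq_tsum_edgeEnergy, ← Dart.toProd_injective.tsum_eq hsupp]
  exact tsum_congr fun d => if_pos d.adj

lemma SimpleGraph.Walk.ofReal_abs_sub_rpow_le_sum_edgeEnergy {G : SimpleGraph V} {u v : V}
    (q : G.Walk u v) (f : V → ℝ) {p : ℝ} (hp : 1 ≤ p) {L : ℕ} (hL : q.length ≤ L) :
    ENNReal.ofReal (|f v - f u| ^ p) ≤ ENNReal.ofReal ((L : ℝ) ^ (p - 1)) *
      ∑ i : Fin L, edgeEnergy G p f (q.getVert i, q.getVert (i.val + 1)) := by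
  have hreal : |f v - f u| ^ p ≤ (L : ℝ) ^ (p - 1) *
      ∑ i ∈ range q.length, |f (q.getVert (i + 1)) - f (q.getVert i)| ^ p := by
    refine (q.abs_sub_rpow_le f hp).trans ?_
    gcongr
  calc ENNReal.ofReal (|f v - f u| ^ p)
      ≤ ENNReal.ofReal ((L : ℝ) ^ (p - 1)) *
          ∑ i ∈ range q.length, edgeEnergy G p f (q.getVert i, q.getVert (i + 1)) := by
        refine (ENNReal.ofReal_le_ofReal hreal).trans_eq ?_
        rw [ENNReal.ofReal_mul (by positivity),
          ENNReal.ofReal_sum_of_nonneg fun i _ => by positivity]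
        congr 1
        exact sum_congr rfl fun i hi => (if_pos (q.adj_getVert_succ (mem_range.mp hi))).symm
    _ ≤ ENNReal.ofReal ((L : ℝ) ^ (p - 1)) *
          ∑ i ∈ range L, edgeEnergy G p f (q.getVert i, q.getVert (i + 1)) := by
        gcongr
    _ = _ := by
        rw [Fin.sum_univ_eq_sum_range (fun i => edgeEnergy G p f (q.getVert i, q.getVert (i + 1)))]

section Routing

variable {W : Type*} {G : SimpleGraph V} {H : SimpleGraph W} (φ : V → W)
  (γ : ∀ d : G.Dart, H.Walk (φ d.fst) (φ d.snd))

-- `t.2.val + 1`, not `t.2 + 1`: addition in `Fin L` wraps around.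
def routedEdge (L : ℕ) (t : G.Dart × Fin L) : W × W :=
  ((γ t.1).getVert t.2, (γ t.1).getVert (t.2.val + 1))

theorem Ip_comp_le_of_routing {L : ℕ} {p : ℝ} (hp : 1 ≤ p) (hγ : ∀ d, (γ d).length ≤ L) {M : ℕ}
    (hM : ∀ w, (routedEdge φ γ L ⁻¹' {w}).encard ≤ M) (f : W → ℝ) :
    Ip G p (fun x => f (φ x)) ≤ ENNReal.ofReal ((L : ℝ) ^ (p - 1)) * M * Ip H p f :=
  calc Ip G p (fun x => f (φ x))
      ≤ ∑' d : G.Dart, ENNReal.ofReal ((L : ℝ) ^ (p - 1)) *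
          ∑ i : Fin L, edgeEnergy H p f (routedEdge φ γ L (d, i)) := by
        rw [Ip_eq_tsum_dart]
        exact ENNReal.tsum_le_tsum fun d =>
          (γ d).ofReal_abs_sub_rpow_le_sum_edgeEnergy f hp (hγ d)
    _ = ENNReal.ofReal ((L : ℝ) ^ (p - 1)) *
          ∑' t : G.Dart × Fin L, edgeEnergy H p f (routedEdge φ γ L t) := by
        rw [ENNReal.tsum_mul_left, ENNReal.tsum_prod']
        simp only [tsum_fintype]
    _ ≤ ENNReal.ofReal ((L : ℝ) ^ (p - 1)) * (M * ∑' w, edgeEnergy H p f w) := by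
        gcongr
        exact ENNReal.tsum_comp_le_mul_tsum_of_encard_fiber_le _ _ hM
    _ = _ := by rw [Ip_eq_tsum_edgeEnergy, mul_assoc]

theorem encard_routedEdge_preimage_le {L k : ℕ} (hG : G.Connected) (hk : BoundedDegree G k)
    (hH : H.Connected) (hγ : ∀ d, (γ d).length ≤ L) {R : ℕ}
    (hR : ∀ x y, H.dist (φ x) (φ y) ≤ 2 * L → G.dist x y ≤ R) (w : W × W) :
    (routedEdge φ γ L ⁻¹' {w}).encard ≤ ((k + 1) ^ R * (k + 1) ^ R * L : ℕ) := by
  set s := {x | H.dist (φ x) w.1 ≤ L}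
  have hs : s.encard ≤ (k + 1) ^ R := hG.encard_le_of_dist_le hk fun x hx y hy =>
    hR x y (by
      have := hH.dist_triangle (u := φ x) (v := w.1) (w := φ y)
      rw [dist_comm (u := w.1)] at this
      simp only [s, Set.mem_ofPred_eq] at hx hy
      omega)
  have hmaps : Set.MapsTo (fun t : G.Dart × Fin L => (t.1.toProd, t.2)) (routedEdge φ γ L ⁻¹' {w})
      ((s ×ˢ s) ×ˢ Set.univ) := by
    rintro ⟨d, i⟩ hdi
    have hw : (γ d).getVert i = w.1 := congrArg Prod.fst hdi
    have h₁ := (γ d).dist_left_getVert_le i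
    have h₂ := (γ d).dist_getVert_right_le i
    have h₃ := hγ d
    have h₄ := i.isLt
    refine ⟨⟨show H.dist (φ d.fst) w.1 ≤ L by rw [← hw]; omega,
      show H.dist (φ d.snd) w.1 ≤ L by rw [← hw, SimpleGraph.dist_comm]; omega⟩, trivial⟩
  calc (routedEdge φ γ L ⁻¹' {w}).encard ≤ ((s ×ˢ s) ×ˢ (Set.univ : Set (Fin L))).encard :=
        Set.encard_le_encard_of_injOn hmaps
          (Dart.toProd_injective.prodMap Function.injective_id).injOn
    _ ≤ ((k + 1) ^ R * (k + 1) ^ R * L : ℕ) := by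
        simp only [Set.encard_prod, Set.encard_univ, ENat.card_eq_coe_fintype_card,
          Fintype.card_fin]
        push_cast
        gcongr

end Routing

theorem stmt17_general {W : Type*}
    (G : SimpleGraph V) (H : SimpleGraph W) (kG : ℕ)
    (hGc : G.Connected) (hHc : H.Connected)
    (hkG : BoundedDegree G kG)
    (p : ℝ) (hp : 1 < p) (φ : V → W)
    (a b : ℝ) (ha : 1 ≤ a)
    (hlow : ∀ x y : V, (1/a) * (G.dist x y : ℝ) - b ≤ (H.dist (φ x) (φ y) : ℝ))
    (hup : ∀ x y : V, (H.dist (φ x) (φ y) : ℝ) ≤ a * (G.dist x y : ℝ) + b) :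
    ∃ C : ℝ≥0∞, C ≠ ⊤ ∧ ∀ f : W → ℝ,
      Ip G p (fun x => f (φ x)) ≤ C * Ip H p f := by
  set L := ⌈a + b⌉₊
  set R := ⌈a * (2 * (L : ℝ) + b)⌉₊
  have hL (d : G.Dart) : H.dist (φ d.fst) (φ d.snd) ≤ L := by
    have h := hup d.fst d.snd
    rw [dist_eq_one_iff_adj.mpr d.adj, Nat.cast_one, mul_one] at h
    exact_mod_cast h.trans (Nat.le_ceil _)
  have hR (x y : V) (hxy : H.dist (φ x) (φ y) ≤ 2 * L) : G.dist x y ≤ R := by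
    have h := (hlow x y).trans (show (H.dist (φ x) (φ y) : ℝ) ≤ 2 * L by exact_mod_cast hxy)
    rw [one_div_mul_eq_div, sub_le_iff_le_add, div_le_iff₀ (by linarith), mul_comm] at h
    exact_mod_cast (h.trans (Nat.le_ceil _) : (G.dist x y : ℝ) ≤ R)
  choose γ hγ using fun d : G.Dart => hHc.exists_walk_length_eq_dist (φ d.fst) (φ d.snd)
  refine ⟨ENNReal.ofReal ((L : ℝ) ^ (p - 1)) * ((kG + 1) ^ R * (kG + 1) ^ R * L : ℕ),
    ENNReal.mul_ne_top ENNReal.ofReal_ne_top (ENNReal.natCast_ne_top _), fun f => ?_⟩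
  have hγL (d : G.Dart) : (γ d).length ≤ L := (hγ d).trans_le (hL d)
  exact Ip_comp_le_of_routing φ γ hp.le hγL
    (encard_routedEdge_preimage_le φ γ hGc hkG hHc hγL hR) f

theorem stmt17 {W : Type*} [Countable V] [Infinite V] [Countable W] [Infinite W]
    (G : SimpleGraph V) (H : SimpleGraph W) (kG kH : ℕ)
    (hGc : G.Connected) (hHc : H.Connected)
    (hkG : BoundedDegree G kG) (hkH : BoundedDegree H kH)
    (p : ℝ) (hp : 1 < p) (φ : V → W)
    (a b c : ℝ) (ha : 1 ≤ a) (hb : 0 ≤ b) (hc : 0 < c)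
    (hlow : ∀ x y : V, (1/a) * (G.dist x y : ℝ) - b ≤ (H.dist (φ x) (φ y) : ℝ))
    (hup : ∀ x y : V, (H.dist (φ x) (φ y) : ℝ) ≤ a * (G.dist x y : ℝ) + b)
    (hdense : ∀ w : W, ∃ x : V, (H.dist (φ x) w : ℝ) < c) :
    ∃ C : ℝ≥0∞, C ≠ ⊤ ∧ ∀ f : W → ℝ,
      Ip G p (fun x => f (φ x)) ≤ C * Ip H p f :=
  stmt17_general G H kG hGc hHc hkG p hp φ a b ha hlow hup
end
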